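/- Let K be a finite field with exactly q elements and char(K) ≠ 2, and consider UJ2 with the associative grading: E0 = span{e11+e22, e12}, E1 = span{e11−e22}. Then for all Yi, Yj ∈ E0 and all Z1, Z2 ∈ E1 one has ((Yi∘Z1)∘Z2)∘Yj^q = ((Yi∘Z1)∘Z2)∘Yj + ((Yj∘Z1)∘Z2)∘Yi − (Z1∘Z2)∘(Yi∘Yj), where Yj^q denotes the q-th matrix power of Yj. -/
import Mathlib


open Matrix

noncomputable section

/-- The 2×2 matrices over `K`. -/
abbrev Mat (K : Type*) [Field K] : Type _ := Matrix (Fin 2) (Fin 2) K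

/-- The Jordan product `u∘v = (1/2)(u·v + v·u)`. -/
def jp {K : Type*} [Field K] (u v : Mat K) : Mat K := (1/2 : K) • (u * v + v * u)

/-- The Jordan associator `(u,v,w) = (u∘v)∘w − u∘(v∘w)`. -/
def assoc {K : Type*} [Field K] (u v w : Mat K) : Mat K := jp (jp u v) w - jp u (jp v w)

def oneM (K : Type*) [Field K] : Mat K := !![1, 0; 0, 1]
def aM (K : Type*) [Field K] : Mat K := !![1, 0; 0, -1]
def bM (K : Type*) [Field K] : Mat K := !![0, 1; 0, 0]

/-- Even component of the associative grading: `span{e11+e22, e12}`. -/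
def E0 (K : Type*) [Field K] : Submodule K (Mat K) :=
  Submodule.span K {oneM K, bM K}

/-- Odd component of the associative grading: `span{e11−e22}`. -/
def E1 (K : Type*) [Field K] : Submodule K (Mat K) :=
  Submodule.span K {aM K}

lemma bsq {K : Type*} [Field K] : bM K * bM K = 0 := by
  ext i j
  fin_cases i <;> fin_cases j <;> simp [bM, Matrix.mul_apply, Fin.sum_univ_two]

lemma pow_formula {K : Type*} [Field K] (α β : K) :
    ∀ n : ℕ, 1 ≤ n → (α • (1 : Mat K) + β • bM K) ^ n
      = (α ^ n) • (1 : Mat K) + ((n : K) * α ^ (n - 1) * β) • bM K := by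
  intro n hn
  induction n with
  | zero => omega
  | succ m ih =>
    rcases Nat.eq_or_lt_of_le hn with h | h
    · simp [← h]
    · have hm : 1 ≤ m := by omega
      have ha : α ^ (m - 1) * α = α ^ m := pow_sub_one_mul (by omega) α
      rw [pow_succ, ih hm, add_mul, mul_add, mul_add, smul_mul_smul_comm, smul_mul_smul_comm,
        smul_mul_smul_comm, smul_mul_smul_comm, bsq, smul_zero, add_zero, Nat.add_sub_cancel]
      simp only [one_mul, mul_one]
      match_scalars
      · ring
      · linear_combination (↑m : K) * β * ha

lemma e0_explicit {K : Type*} [Field K] (a b : K) :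
    a • (1 : Mat K) + b • bM K = !![a, b; 0, a] := by
  ext i j
  fin_cases i <;> fin_cases j <;> simp [bM, Matrix.one_apply]

lemma e1_explicit {K : Type*} [Field K] (z : K) :
    z • aM K = !![z, 0; 0, -z] := by
  ext i j
  fin_cases i <;> fin_cases j <;> simp [aM]

set_option maxHeartbeats 1000000 in
lemma main_identity (K : Type*) [Field K] (a b c d z1 z2 : K) :
    jp (jp (jp !![a, b; 0, a] !![z1, 0; 0, -z1]) !![z2, 0; 0, -z2]) !![c, (0:K); 0, c] =
      jp (jp (jp !![a, b; 0, a] !![z1, 0; 0, -z1]) !![z2, 0; 0, -z2]) !![c, d; 0, c]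
      + jp (jp (jp !![c, d; 0, c] !![z1, 0; 0, -z1]) !![z2, 0; 0, -z2]) !![a, b; 0, a]
      - jp (jp !![z1, 0; 0, -z1] !![z2, 0; 0, -z2]) (jp !![a, b; 0, a] !![c, d; 0, c]) := by
  simp only [jp, Matrix.mul_fin_two, Matrix.smul_of, Matrix.smul_cons, Matrix.smul_empty,
    smul_eq_mul, ← Matrix.of_add_of, Matrix.add_cons, Matrix.head_cons, Matrix.tail_cons,
    Matrix.empty_add_empty]
  ext i j
  fin_cases i <;> fin_cases j <;> simp <;> ring_nf

/-- over a finite field with `q` elements, `char K ≠ 2`, in `UJ₂` with the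
associative grading, for even `Yi, Yj` and odd `Z1, Z2`:
`((Yi∘Z1)∘Z2)∘Yj^q = ((Yi∘Z1)∘Z2)∘Yj + ((Yj∘Z1)∘Z2)∘Yi − (Z1∘Z2)∘(Yi∘Yj)`. -/
theorem stmt_9 (K : Type*) [Field K] [Fintype K] (q : ℕ) (hq : Fintype.card K = q)
    (hK : ringChar K ≠ 2)
    (Yi Yj : Mat K) (hYi : Yi ∈ E0 K) (hYj : Yj ∈ E0 K)
    (Z1 Z2 : Mat K) (hZ1 : Z1 ∈ E1 K) (hZ2 : Z2 ∈ E1 K) :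
    jp (jp (jp Yi Z1) Z2) (Yj ^ q) =
      jp (jp (jp Yi Z1) Z2) Yj + jp (jp (jp Yj Z1) Z2) Yi - jp (jp Z1 Z2) (jp Yi Yj) := by
  have h1 : oneM K = (1 : Mat K) := by
    ext i j; fin_cases i <;> fin_cases j <;> simp [oneM, Matrix.one_apply]
  rw [E0, h1] at hYi hYj
  obtain ⟨a, b, hab⟩ := Submodule.mem_span_pair.mp hYi
  obtain ⟨c, d, hcd⟩ := Submodule.mem_span_pair.mp hYj
  obtain ⟨z1, hz1⟩ := Submodule.mem_span_singleton.mp hZ1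
  obtain ⟨z2, hz2⟩ := Submodule.mem_span_singleton.mp hZ2
  have hq1 : 1 ≤ q := hq ▸ Fintype.card_pos
  have hcard : ((q : ℕ) : K) = 0 := by
    rw [← hq]; exact FiniteField.cast_card_eq_zero K
  have hYjq : Yj ^ q = !![c, 0; 0, c] := by
    rw [← hcd, pow_formula c d q hq1, ← hq, FiniteField.pow_card,
      FiniteField.cast_card_eq_zero, zero_mul, zero_mul, zero_smul, add_zero]
    simpa using e0_explicit c 0
  rw [hYjq, ← hab, ← hcd, ← hz1, ← hz2, e0_explicit, e0_explicit, e1_explicit, e1_explicit]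
  exact main_identity K a b c d z1 z2
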